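/- On the reference tetrahedron with faces F_1 = {x_1=0}, F_2 = {x_2=0}, F_3 = {x_3=0}, F_4 = {x_1+x_2+x_3=1} (with outward unit normals n), the normal-normal component of the face tensor S^{F_m} restricted to face F_i satisfies (S^{F_m} n)·n = c δ_{im} for some nonzero constant c, i.e. it is a nonzero constant on face F_m and vanishes on all other faces. -/

import Mathlib

/-!
On a coordinate face the outward normal is `-e_j`, so `(S n)·n = S_jj`; on the slanted face
`n = (1,1,1)/√3`, so `(S n)·n` is a third of the sum of all entries of `S`. The diagonal of
`S^{F_m}` is `-6 e_m` for `m ≤ 3` and zero for `m = 4`, while its entries sum to `0` for `m ≤ 3`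
and to `6` for `m = 4`.
-/

open Matrix

/-- The four face tensors of the TDNNS reference element. -/
def SF : Fin 4 → Matrix (Fin 3) (Fin 3) ℝ
  | 0 => !![-6, 1, 1; 1, 0, 1; 1, 1, 0]
  | 1 => !![0, 1, 1; 1, -6, 1; 1, 1, 0]
  | 2 => !![0, 1, 1; 1, 0, 1; 1, 1, -6]
  | 3 => !![0, 1, 1; 1, 0, 1; 1, 1, 0]

/-- The two interior tensors of the TDNNS reference element. -/
def STen : Fin 2 → Matrix (Fin 3) (Fin 3) ℝ
  | 0 => !![0, 0, -1; 0, 0, 1; -1, 1, 0]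
  | 1 => !![0, -1, 0; -1, 0, 1; 0, 1, 0]

/-- Outward unit normals of the reference tetrahedron's four faces. -/
noncomputable def refNormal : Fin 4 → (Fin 3 → ℝ)
  | 0 => fun i => if i = 0 then -1 else 0
  | 1 => fun i => if i = 1 then -1 else 0
  | 2 => fun i => if i = 2 then -1 else 0
  | 3 => fun _ => 1 / Real.sqrt 3

theorem Matrix.mulVec_neg_single_one_dotProduct {n R : Type*} [Fintype n] [DecidableEq n]
    [CommRing R] (A : Matrix n n R) (j : n) :
    A *ᵥ -Pi.single j 1 ⬝ᵥ -Pi.single j 1 = A j j := by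
  simp [mulVec_neg]

theorem Matrix.mulVec_const_dotProduct_const {n R : Type*} [Fintype n] [CommRing R]
    (A : Matrix n n R) (a : R) :
    A *ᵥ (fun _ => a) ⬝ᵥ (fun _ => a) = a ^ 2 * ∑ i, ∑ j, A i j := by
  simp only [mulVec, dotProduct, Finset.mul_sum, Finset.sum_mul]
  exact Finset.sum_congr rfl fun _ _ => Finset.sum_congr rfl fun _ _ => by ring

theorem refNormal_castSucc (j : Fin 3) : refNormal j.castSucc = -Pi.single j 1 := by
  fin_cases j <;> ext k <;> fin_cases k <;> simp [refNormal]

theorem refNormal_last : refNormal (Fin.last 3) = fun _ => 1 / Real.sqrt 3 := rfl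

theorem SF_diag (m : Fin 4) (j : Fin 3) : SF m j j = if j.castSucc = m then -6 else 0 := by
  fin_cases m <;> fin_cases j <;> simp [SF]

theorem SF_sum (m : Fin 4) : ∑ i, ∑ j, SF m i j = if Fin.last 3 = m then 6 else 0 := by
  fin_cases m <;> simp [SF, Fin.sum_univ_three] <;> norm_num

/-- The normal-normal component of the face tensor `S^{F_m}` on face `F_i` of the reference
tetrahedron is a nonzero constant `c` for `i = m` and vanishes for `i ≠ m`. -/
theorem stmt2 (m : Fin 4) :
    ∃ c : ℝ, c ≠ 0 ∧ ∀ i : Fin 4,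
      (SF m).mulVec (refNormal i) ⬝ᵥ refNormal i = if i = m then c else 0 := by
  refine ⟨if Fin.last 3 = m then 2 else -6, by split_ifs <;> norm_num, fun i => ?_⟩
  rcases Fin.eq_castSucc_or_eq_last i with ⟨j, rfl⟩ | rfl
  · rw [refNormal_castSucc, mulVec_neg_single_one_dotProduct, SF_diag]
    rcases eq_or_ne j.castSucc m with rfl | hjm
    · rw [if_pos rfl, if_pos rfl, if_neg (Fin.castSucc_lt_last j).ne']
    · simp [hjm]
  · rw [refNormal_last, mulVec_const_dotProduct_const, SF_sum, div_pow, Real.sq_sqrt (by norm_num)]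
    split_ifs <;> norm_num
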